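/- Let M = ⊕_{n≥0} M(n) be an admissible module for a vertex operator algebra V. For homogeneous v ∈ V set o(v) = v_{wt v - 1}. Then for all u, v ∈ V, o(u) o(v) = o(u * v) as operators on M(0). -/

import Mathlib

/-- Generalized binomial coefficient `C(n, k)` for `n : ℤ`, valued in `ℂ`. -/
noncomputable def cbinom (n : ℤ) (k : ℕ) : ℂ :=
  (∏ i ∈ Finset.range k, ((n : ℂ) - (i : ℂ))) / (Nat.factorial k : ℂ)

/-- A vertex operator algebra structure on a complex vector space `V`. -/
structure VOA (V : Type) [AddCommGroup V] [Module ℂ V] where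
  mode : V → ℤ → Module.End ℂ V
  vacuum : V
  conformal : V
  grading : ℤ → Submodule ℂ V
  internal : Function.Bijective (DirectSum.coeLinearMap grading)
  mode_add : ∀ (u v : V) (n : ℤ), mode (u + v) n = mode u n + mode v n
  mode_smul : ∀ (c : ℂ) (u : V) (n : ℤ), mode (c • u) n = c • mode u n
  truncation : ∀ u v : V, ∃ N : ℤ, ∀ n : ℤ, N ≤ n → mode u n v = 0
  vacuum_mem : vacuum ∈ grading 0
  conformal_mem : conformal ∈ grading 2
  vacuum_mode : ∀ (v : V) (n : ℤ), mode vacuum n v = if n = -1 then v else 0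
  creation : ∀ (u : V) (n : ℤ), 0 ≤ n → mode u n vacuum = 0
  creation_neg_one : ∀ u : V, mode u (-1) vacuum = u
  L0_eigen : ∀ (n : ℤ) (u : V), u ∈ grading n → mode conformal 1 u = (n : ℂ) • u
  Lneg1_deriv : ∀ (u : V) (n : ℤ), mode (mode conformal 0 u) n = (-n : ℂ) • mode u (n - 1)
  grading_mode : ∀ (r s m : ℤ) (u v : V), u ∈ grading r → v ∈ grading s →
    mode u m v ∈ grading (r + s - m - 1)
  bounded_below : ∃ N : ℤ, ∀ n : ℤ, n < N → grading n = ⊥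
  fin_dim : ∀ n : ℤ, FiniteDimensional ℂ (grading n)
  borcherds : ∀ (p q r : ℤ) (u v w : V),
    (∑ᶠ i : ℕ, cbinom p i • mode (mode u (r + i) v) (p + q - i) w) =
    ∑ᶠ i : ℕ, ((-1 : ℂ) ^ i * cbinom r i) •
      (mode u (p + r - i) (mode v (q + i) w)
        - (-1 : ℂ) ^ r • mode v (q + r - i) (mode u (p + i) w))

variable {V : Type} [AddCommGroup V] [Module ℂ V]

/-- Projection onto the weight-`n` subspace. -/
noncomputable def VOA.proj (d : VOA V) (n : ℤ) : V →ₗ[ℂ] V :=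
  (d.grading n).subtype ∘ₗ (DirectSum.component ℂ ℤ (fun m => d.grading m) n) ∘ₗ
    (LinearEquiv.ofBijective (DirectSum.coeLinearMap d.grading) d.internal).symm.toLinearMap

/-- `Res_z (1+z)^N z^{-k} Y(u,z)v` for a vector `u` regarded as having weight contribution `N`. -/
noncomputable def VOA.hres (d : VOA V) (N k : ℤ) (u v : V) : V :=
  ∑ᶠ i : ℕ, cbinom N i • d.mode u ((i : ℤ) - k) v

/-- `Res_z (1+z)^{wt u + m} z^{-k} Y(u,z)v`, extended bilinearly from homogeneous `u`. -/
noncomputable def VOA.bres (d : VOA V) (m k : ℤ) (u v : V) : V :=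
  ∑ᶠ n : ℤ, d.hres (n + m) k (d.proj n u) v

/-- The Zhu product `u * v`. -/
noncomputable def VOA.star (d : VOA V) (u v : V) : V := d.bres 0 1 u v

/-- The Zhu circle product `u ∘ v`. -/
noncomputable def VOA.circ (d : VOA V) (u v : V) : V := d.bres 0 2 u v

/-- The subspace `O(V)` spanned by all `u ∘ v`. -/
def VOA.Ozhu (d : VOA V) : Submodule ℂ V := Submodule.span ℂ {w : V | ∃ u v : V, w = d.circ u v}

/-- The product `u ∘_n v`. -/
noncomputable def VOA.circn (d : VOA V) (n : ℕ) (u v : V) : V := d.bres n (2 * n + 2) u v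

/-- The product `u *_n v` of Dong–Li–Mason. -/
noncomputable def VOA.starn (d : VOA V) (n : ℕ) (u v : V) : V :=
  ∑ m ∈ Finset.range (n + 1),
    ((-1 : ℂ) ^ m * cbinom ((m : ℤ) + (n : ℤ)) n) • d.bres n ((n : ℤ) + (m : ℤ) + 1) u v

/-- The subspace `O_n(V)`. -/
def VOA.On (d : VOA V) (n : ℕ) : Submodule ℂ V :=
  Submodule.span ℂ ({w : V | ∃ u v : V, w = d.circn n u v} ∪
    {w : V | ∃ u : V, w = d.mode d.conformal 0 u + d.mode d.conformal 1 u})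

/-- The Dong–Jiang product `u *_{m,p}^n v`. -/
noncomputable def VOA.starmpn (d : VOA V) (m p n : ℕ) (u v : V) : V :=
  ∑ i ∈ Finset.range (p + 1),
    ((-1 : ℂ) ^ i * cbinom ((m : ℤ) + (n : ℤ) - (p : ℤ) + (i : ℤ)) i) •
      d.bres m ((m : ℤ) + (n : ℤ) - (p : ℤ) + (i : ℤ) + 1) u v

/-- The Dong–Jiang product `u ∘_m^n v`. -/
noncomputable def VOA.circmn (d : VOA V) (n m : ℕ) (u v : V) : V :=
  d.bres m ((n : ℤ) + (m : ℤ) + 2) u v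

/-- The subspace `O_{n,m}(V) = O'_{n,m}(V) + O''_{n,m}(V) + O'''_{n,m}(V)` of Dong–Jiang. -/
def VOA.Onm (d : VOA V) (n m : ℕ) : Submodule ℂ V :=
  Submodule.span ℂ (
    {w : V | ∃ u v : V, w = d.circmn n m u v} ∪
    {w : V | ∃ u : V, w = d.mode d.conformal 0 u + d.mode d.conformal 1 u
        + (((m : ℂ) - (n : ℂ)) • u)} ∪
    {w : V | ∃ (u a b c : V) (p₁ p₂ p₃ : ℕ), w = d.starmpn m p₃ n u
        (d.starmpn m p₁ p₃ (d.starmpn p₁ p₂ p₃ a b) c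
          - d.starmpn m p₂ p₃ a (d.starmpn m p₁ p₂ b c))} ∪
    {w : V | ∃ (p : ℕ) (u x v : V), x ∈ d.On p ∧ w = d.starmpn m p n (d.starmpn p p n u x) v})

/-- The subspace `C_2(V)` spanned by the `u_{-2} v`. -/
def VOA.C2 (d : VOA V) : Submodule ℂ V := Submodule.span ℂ {w : V | ∃ u v : V, w = d.mode u (-2) v}

/-- `V` is a simple vertex operator algebra: its only ideals are `0` and `V`. -/
def VOA.IsSimpleVOA (d : VOA V) : Prop :=
  (∃ v : V, v ≠ 0) ∧ ∀ P : Submodule ℂ V,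
    (∀ (u : V) (n : ℤ), ∀ w ∈ P, d.mode u n w ∈ P) → P = ⊥ ∨ P = ⊤

/-- A weak module for the vertex operator algebra `d`. -/
structure WeakMod (d : VOA V) (M : Type) [AddCommGroup M] [Module ℂ M] where
  act : V → ℤ → Module.End ℂ M
  act_add : ∀ (u v : V) (n : ℤ), act (u + v) n = act u n + act v n
  act_smul : ∀ (c : ℂ) (u : V) (n : ℤ), act (c • u) n = c • act u n
  truncation : ∀ (u : V) (w : M), ∃ N : ℤ, ∀ n : ℤ, N ≤ n → act u n w = 0
  vacuum_act : ∀ (w : M) (n : ℤ), act d.vacuum n w = if n = -1 then w else 0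
  borcherds : ∀ (p q r : ℤ) (u v : V) (w : M),
    (∑ᶠ i : ℕ, cbinom p i • act (d.mode u (r + i) v) (p + q - i) w) =
    ∑ᶠ i : ℕ, ((-1 : ℂ) ^ i * cbinom r i) •
      (act u (p + r - i) (act v (q + i) w)
        - (-1 : ℂ) ^ r • act v (q + r - i) (act u (p + i) w))

/-- An admissible (ℤ₊-graded) module for the vertex operator algebra `d`. -/
structure AdmMod (d : VOA V) (M : Type) [AddCommGroup M] [Module ℂ M]
    extends WeakMod d M where
  gr : ℤ → Submodule ℂ M
  gr_internal : Function.Bijective (DirectSum.coeLinearMap gr)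
  gr_neg : ∀ n : ℤ, n < 0 → gr n = ⊥
  gr_act : ∀ (r : ℤ) (u : V), u ∈ d.grading r → ∀ (m n : ℤ) (w : M), w ∈ gr n →
    act u m w ∈ gr (r + n - m - 1)

variable {M : Type} [AddCommGroup M] [Module ℂ M]

/-- The zero-mode `o(v) = v_{wt v - 1}`, extended linearly from homogeneous `v`. -/
noncomputable def WeakMod.o {d : VOA V} (W : WeakMod d M) (v : V) (w : M) : M :=
  ∑ᶠ r : ℤ, W.act (d.proj r v) (r - 1) w

/-- The mode `o_t(v) = v_{wt v - 1 - t}`, extended linearly from homogeneous `v`. -/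
noncomputable def WeakMod.ot {d : VOA V} (W : WeakMod d M) (t : ℤ) (v : V) (w : M) : M :=
  ∑ᶠ r : ℤ, W.act (d.proj r v) (r - 1 - t) w

/-- The subspace `Ω_n(M)` of a weak module. -/
def WeakMod.OmegaSet {d : VOA V} (W : WeakMod d M) (n : ℕ) : Set M :=
  {w : M | ∀ (r : ℤ) (u : V), u ∈ d.grading r → ∀ m : ℤ, m > r - 1 + (n : ℤ) → W.act u m w = 0}

/-- A subspace stable under all modes. -/
def WeakMod.IsStable {d : VOA V} (W : WeakMod d M) (P : Submodule ℂ M) : Prop :=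
  ∀ (u : V) (n : ℤ), ∀ w ∈ P, W.act u n w ∈ P

/-- A subspace compatible with the grading of an admissible module. -/
def AdmMod.IsGraded {d : VOA V} (A : AdmMod d M) (P : Submodule ℂ M) : Prop :=
  P = ⨆ n : ℤ, (P ⊓ A.gr n)

/-- `P` is an irreducible admissible submodule. -/
def AdmMod.IrredSub {d : VOA V} (A : AdmMod d M) (P : Submodule ℂ M) : Prop :=
  P ≠ ⊥ ∧ A.toWeakMod.IsStable P ∧ A.IsGraded P ∧
    ∀ Q : Submodule ℂ M, Q ≤ P → A.toWeakMod.IsStable Q → A.IsGraded Q → Q = ⊥ ∨ Q = P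

/-- The admissible module is irreducible. -/
def AdmMod.IsIrreducible {d : VOA V} (A : AdmMod d M) : Prop :=
  (∃ w : M, w ≠ 0) ∧
    ∀ P : Submodule ℂ M, A.toWeakMod.IsStable P → A.IsGraded P → P = ⊥ ∨ P = ⊤

/-- Rationality: every admissible module is a direct sum of irreducible admissible submodules. -/
def Rational (d : VOA V) : Prop :=
  ∀ (M : Type) [AddCommGroup M] [Module ℂ M] (A : AdmMod d M),
    ∃ (ι : Type) (f : ι → Submodule ℂ M),
      (∀ i, A.IrredSub (f i)) ∧ iSupIndep f ∧ (⨆ i, f i) = ⊤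

/-- Equivalence of admissible modules. -/
def AdmEquiv {d : VOA V} {M₁ M₂ : Type} [AddCommGroup M₁] [Module ℂ M₁]
    [AddCommGroup M₂] [Module ℂ M₂] (A₁ : AdmMod d M₁) (A₂ : AdmMod d M₂) : Prop :=
  ∃ e : M₁ ≃ₗ[ℂ] M₂, ∀ (u : V) (n : ℤ) (w : M₁), e (A₁.act u n w) = A₂.act u n (e w)

/-- An ordinary-module structure on a weak module: a `ℂ`-grading by finite dimensional
`L(0)`-eigenspaces, bounded below in each coset of `ℤ`. -/
structure OrdinaryStruct {d : VOA V} (W : WeakMod d M) where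
  grc : ℂ → Submodule ℂ M
  internal : Function.Bijective (DirectSum.coeLinearMap grc)
  eigen : ∀ (lam : ℂ) (w : M), w ∈ grc lam → W.act d.conformal 1 w = lam • w
  findim : ∀ lam : ℂ, FiniteDimensional ℂ (grc lam)
  bounded : ∀ lam : ℂ, ∃ N : ℤ, ∀ n : ℤ, n < N → grc (lam + (n : ℂ)) = ⊥

/-- An admissible module is ordinary. -/
def AdmMod.IsOrdinary {d : VOA V} (A : AdmMod d M) : Prop :=
  Nonempty (OrdinaryStruct A.toWeakMod)

/-- A realization of the quotient associative algebra `V/Osub` with product induced by `mu`. -/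
structure Realization (Osub : Submodule ℂ V) (mu : V → V → V) (one : V) where
  carrier : Type
  [ring : Ring carrier]
  [alg : Algebra ℂ carrier]
  emb : V →ₗ[ℂ] carrier
  surj : Function.Surjective emb
  ker_eq : LinearMap.ker emb = Osub
  mul_compat : ∀ u v : V, emb (mu u v) = emb u * emb v
  one_compat : emb one = 1

/-- The realized algebra is semisimple. -/
def Realization.Semisimple {Osub : Submodule ℂ V} {mu : V → V → V} {one : V}
    (R : Realization Osub mu one) : Prop :=
  letI := R.ring; IsSemisimpleRing R.carrier

/-- The realized algebra is finite dimensional over `ℂ`. -/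
def Realization.FinDim {Osub : Submodule ℂ V} {mu : V → V → V} {one : V}
    (R : Realization Osub mu one) : Prop :=
  letI := R.ring; letI := R.alg; FiniteDimensional ℂ R.carrier

/-- A module over the quotient algebra `V/Osub`, given as a representation of `V`
killing `Osub` and multiplicative for `mu`. -/
structure RepOf (Osub : Submodule ℂ V) (mu : V → V → V) (one : V)
    (U : Type) [AddCommGroup U] [Module ℂ U] where
  rep : V →ₗ[ℂ] Module.End ℂ U
  kills : ∀ v ∈ Osub, rep v = 0
  mul_compat : ∀ u v : V, rep (mu u v) = rep u * rep v
  one_compat : rep one = 1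

/-- Simplicity of such a representation. -/
def RepOf.IsSimple {Osub : Submodule ℂ V} {mu : V → V → V} {one : V}
    {U : Type} [AddCommGroup U] [Module ℂ U] (Z : RepOf Osub mu one U) : Prop :=
  (∃ u : U, u ≠ 0) ∧
    ∀ P : Submodule ℂ U, (∀ v : V, ∀ x ∈ P, Z.rep v x ∈ P) → P = ⊥ ∨ P = ⊤

/-- Equivalence of two such representations. -/
def RepEquiv {Osub : Submodule ℂ V} {mu : V → V → V} {one : V}
    {U₁ U₂ : Type} [AddCommGroup U₁] [Module ℂ U₁] [AddCommGroup U₂] [Module ℂ U₂]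
    (Z₁ : RepOf Osub mu one U₁) (Z₂ : RepOf Osub mu one U₂) : Prop :=
  ∃ e : U₁ ≃ₗ[ℂ] U₂, ∀ (v : V) (x : U₁), e (Z₁.rep v x) = Z₂.rep v (e x)


section Aux

open Function

variable (d : VOA V)

lemma VOA.internal' : DirectSum.IsInternal d.grading := d.internal

lemma VOA.proj_apply (n : ℤ) (x : V) :
    d.proj n x =
      ((LinearEquiv.ofBijective (DirectSum.coeLinearMap d.grading) d.internal).symm x n : V) :=
  rfl

lemma VOA.proj_mem (n : ℤ) (x : V) : d.proj n x ∈ d.grading n := by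
  rw [proj_apply]; exact Submodule.coe_mem _

lemma VOA.proj_eq_of_mem {m : ℤ} {x : V} (hx : x ∈ d.grading m) (n : ℤ) :
    d.proj n x = if n = m then x else 0 := by
  rw [proj_apply]
  by_cases h : n = m
  · subst h
    rw [(d.internal').ofBijective_coeLinearMap_of_mem hx]
    simp
  · rw [(d.internal').ofBijective_coeLinearMap_of_mem_ne (Ne.symm h) hx]
    simp [h]

lemma VOA.proj_support_finite (x : V) :
    (Function.support fun n => d.proj n x).Finite := by
  classical
  set f := (LinearEquiv.ofBijective (DirectSum.coeLinearMap d.grading) d.internal).symm x with hf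
  apply Set.Finite.subset (DFinsupp.support f).finite_toSet
  intro n hn
  simp only [Function.mem_support] at hn
  simp only [Finset.coe_sort_coe, Finset.mem_coe, DFinsupp.mem_support_iff]
  intro h0
  apply hn
  rw [proj_apply, ← hf, h0, Submodule.coe_zero]

lemma VOA.sum_proj (x : V) : ∑ᶠ n, d.proj n x = x := by
  classical
  set e := LinearEquiv.ofBijective (DirectSum.coeLinearMap d.grading) d.internal with he
  set f := e.symm x with hf
  have hsupp : (Function.support fun n => d.proj n x) ⊆ ↑(DFinsupp.support f) := by
    intro n hn
    simp only [Function.mem_support] at hn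
    simp only [Finset.mem_coe, DFinsupp.mem_support_iff]
    intro h0; apply hn; rw [proj_apply, ← he, ← hf, h0, Submodule.coe_zero]
  rw [finsum_eq_sum_of_support_subset _ hsupp]
  have habs : ∑ n ∈ DFinsupp.support f, d.proj n x = ∑ n ∈ DFinsupp.support f, ((f n : V)) :=
    Finset.sum_congr rfl fun n _ => by rw [proj_apply, ← he, ← hf]
  rw [habs, ← DFinsupp.sum, ← DirectSum.coeLinearMap_eq_dfinsuppSum, hf]
  exact e.apply_symm_apply x

lemma VOA.sum_proj_finset {T : Finset ℤ}
    (x : V) (hT : (Function.support fun n => d.proj n x) ⊆ ↑T) :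
    ∑ n ∈ T, d.proj n x = x := by
  rw [← finsum_eq_sum_of_support_subset _ hT, d.sum_proj]

lemma VOA.mode_zero (n : ℤ) : d.mode 0 n = 0 := by
  have h := d.mode_smul 0 0 n
  simpa using h

lemma cbinom_zero (n : ℤ) : cbinom n 0 = 1 := by simp [cbinom]

variable {M : Type} [AddCommGroup M] [Module ℂ M]

lemma WeakMod.act_zero {d : VOA V} (W : WeakMod d M) (n : ℤ) : W.act (0 : V) n = 0 := by
  have h := W.act_smul 0 0 n
  simpa using h

lemma WeakMod.o_support_subset {d : VOA V} (W : WeakMod d M) (x : V) (w : M) :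
    (Function.support fun r => W.act (d.proj r x) (r - 1) w) ⊆
      (Function.support fun r => d.proj r x) := by
  intro r hr
  simp only [Function.mem_support] at hr ⊢
  intro h0
  apply hr
  rw [h0, W.act_zero, LinearMap.zero_apply]

lemma WeakMod.o_eq_sum {d : VOA V} (W : WeakMod d M) (x : V) (w : M) {T : Finset ℤ}
    (hT : (Function.support fun n => d.proj n x) ⊆ ↑T) :
    W.o x w = ∑ r ∈ T, W.act (d.proj r x) (r - 1) w :=
  finsum_eq_sum_of_support_subset _ ((W.o_support_subset x w).trans hT)

lemma WeakMod.o_homog {d : VOA V} (W : WeakMod d M) {t : ℤ} {x : V}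
    (hx : x ∈ d.grading t) (w : M) :
    W.o x w = W.act x (t - 1) w := by
  rw [WeakMod.o]
  rw [finsum_eq_single _ t]
  · rw [d.proj_eq_of_mem hx t, if_pos rfl]
  · intro r hr
    rw [d.proj_eq_of_mem hx r, if_neg hr, W.act_zero, LinearMap.zero_apply]

lemma WeakMod.o_add {d : VOA V} (W : WeakMod d M) (x y : V) (w : M) :
    W.o (x + y) w = W.o x w + W.o y w := by
  rw [WeakMod.o, WeakMod.o, WeakMod.o, ← finsum_add_distrib
    ((d.proj_support_finite x).subset (W.o_support_subset x w))
    ((d.proj_support_finite y).subset (W.o_support_subset y w))]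
  apply finsum_congr
  intro r
  rw [map_add, W.act_add, LinearMap.add_apply]

lemma WeakMod.o_zero {d : VOA V} (W : WeakMod d M) (w : M) : W.o (0 : V) w = 0 := by
  rw [WeakMod.o]
  apply finsum_eq_zero_of_forall_eq_zero
  intro r
  rw [map_zero, W.act_zero, LinearMap.zero_apply]

lemma WeakMod.o_smul {d : VOA V} (W : WeakMod d M) (c : ℂ) (x : V) (w : M) :
    W.o (c • x) w = c • W.o x w := by
  rw [WeakMod.o, WeakMod.o, smul_finsum' c
    ((d.proj_support_finite x).subset (W.o_support_subset x w))]
  apply finsum_congr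
  intro r
  rw [map_smul, W.act_smul, LinearMap.smul_apply]

lemma WeakMod.o_sum {d : VOA V} (W : WeakMod d M) {ι : Type*} (T : Finset ι)
    (x : ι → V) (w : M) :
    W.o (∑ j ∈ T, x j) w = ∑ j ∈ T, W.o (x j) w := by
  classical
  induction T using Finset.induction with
  | empty => simpa using W.o_zero w
  | insert _ _ h ih =>
      rw [Finset.sum_insert h, Finset.sum_insert h, W.o_add, ih]

lemma AdmMod.act_grzero {d : VOA V} (A : AdmMod d M) {r : ℤ} {a : V}
    (ha : a ∈ d.grading r) {w : M} (hw : w ∈ A.gr 0) {m : ℤ} (hm : r - m - 1 < 0) :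
    A.act a m w = 0 := by
  have h := A.gr_act r a ha m 0 w hw
  rw [A.gr_neg (r + 0 - m - 1) (by omega)] at h
  simpa using h

/-- Specialized Borcherds identity: associativity on the lowest weight space. -/
lemma AdmMod.key {d : VOA V} (A : AdmMod d M) {r s : ℤ} {a b : V}
    (ha : a ∈ d.grading r) (hb : b ∈ d.grading s) {w : M} (hw : w ∈ A.gr 0) :
    (∑ᶠ i : ℕ, cbinom r i • A.act (d.mode a ((i : ℤ) - 1) b) (r + s - i - 1) w) =
      A.act a (r - 1) (A.act b (s - 1) w) := by
  have hB := A.borcherds r (s - 1) (-1) a b w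
  have hL : (∑ᶠ i : ℕ, cbinom r i • A.act (d.mode a (-1 + i) b) (r + (s - 1) - i) w) =
      ∑ᶠ i : ℕ, cbinom r i • A.act (d.mode a ((i : ℤ) - 1) b) (r + s - i - 1) w := by
    apply finsum_congr; intro i
    have e1 : -1 + (i : ℤ) = (i : ℤ) - 1 := by ring
    have e2 : r + (s - 1) - (i : ℤ) = r + s - i - 1 := by ring
    rw [e1, e2]
  rw [hL] at hB
  rw [hB, finsum_eq_single _ 0]
  · have h1 : A.act a r w = 0 := A.act_grzero ha hw (by omega)
    simp only [Nat.cast_zero, pow_zero, cbinom_zero, one_mul, one_smul, add_zero, sub_zero, h1,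
      map_zero, smul_zero]
    have e3 : r + -1 = r - 1 := by ring
    rw [e3]
  · intro i hi
    have hi1 : 1 ≤ (i : ℤ) := by exact_mod_cast Nat.one_le_iff_ne_zero.mpr hi
    have h1 : A.act b (s - 1 + i) w = 0 := A.act_grzero hb hw (by omega)
    have h2 : A.act a (r + i) w = 0 := A.act_grzero ha hw (by omega)
    rw [h1, h2, map_zero, map_zero, smul_zero, sub_zero, smul_zero]

lemma VOA.hres_support_subset (N k : ℤ) (a b : V) {I : ℕ}
    (hI : ∀ i : ℕ, I ≤ i → d.mode a ((i : ℤ) - k) b = 0) :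
    (Function.support fun i : ℕ => cbinom N i • d.mode a ((i : ℤ) - k) b) ⊆
      ↑(Finset.range I) := by
  intro i hi
  simp only [Function.mem_support] at hi
  simp only [Finset.coe_range, Set.mem_Iio]
  by_contra h
  exact hi (by rw [hI i (by omega), smul_zero])

lemma VOA.hres_trunc_bound (a b : V) (k : ℤ) :
    ∃ I : ℕ, ∀ i : ℕ, I ≤ i → d.mode a ((i : ℤ) - k) b = 0 := by
  obtain ⟨N, hN⟩ := d.truncation a b
  refine ⟨(N + k).toNat, fun i hi => hN _ ?_⟩
  omega

lemma VOA.hres_zero_left (N k : ℤ) (b : V) : d.hres N k 0 b = 0 := by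
  rw [VOA.hres]
  apply finsum_eq_zero_of_forall_eq_zero
  intro i
  rw [d.mode_zero, LinearMap.zero_apply, smul_zero]

lemma VOA.hres_zero_right (N k : ℤ) (a : V) : d.hres N k a 0 = 0 := by
  rw [VOA.hres]
  apply finsum_eq_zero_of_forall_eq_zero
  intro i
  rw [map_zero, smul_zero]

lemma VOA.hres_add_right (N k : ℤ) (a b c : V) :
    d.hres N k a (b + c) = d.hres N k a b + d.hres N k a c := by
  obtain ⟨I1, hI1⟩ := d.hres_trunc_bound a b k
  obtain ⟨I2, hI2⟩ := d.hres_trunc_bound a c k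
  rw [VOA.hres, VOA.hres, VOA.hres, ← finsum_add_distrib
    ((Finset.range I1).finite_toSet.subset (d.hres_support_subset N k a b hI1))
    ((Finset.range I2).finite_toSet.subset (d.hres_support_subset N k a c hI2))]
  apply finsum_congr
  intro i
  rw [map_add, smul_add]

lemma VOA.hres_sum_right (N k : ℤ) (a : V) {ι : Type*} (T : Finset ι) (b : ι → V) :
    d.hres N k a (∑ j ∈ T, b j) = ∑ j ∈ T, d.hres N k a (b j) := by
  classical
  induction T using Finset.induction with
  | empty => simpa using d.hres_zero_right N k a
  | insert _ _ h ih =>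
      rw [Finset.sum_insert h, Finset.sum_insert h, d.hres_add_right, ih]

/-- Lemma K: `o` of `hres n 1 a b` on the lowest weight space. -/
lemma AdmMod.o_hres {d : VOA V} (A : AdmMod d M) {n s : ℤ} {a b : V}
    (ha : a ∈ d.grading n) (hb : b ∈ d.grading s) {w : M} (hw : w ∈ A.gr 0) :
    A.toWeakMod.o (d.hres n 1 a b) w = A.act a (n - 1) (A.act b (s - 1) w) := by
  obtain ⟨I, hI⟩ := d.hres_trunc_bound a b 1
  have hdecomp : d.hres n 1 a b =
      ∑ i ∈ Finset.range I, cbinom n i • d.mode a ((i : ℤ) - 1) b :=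
    finsum_eq_sum_of_support_subset _ (d.hres_support_subset n 1 a b hI)
  rw [hdecomp, A.toWeakMod.o_sum]
  have hterm : ∀ i ∈ Finset.range I,
      A.toWeakMod.o (cbinom n i • d.mode a ((i : ℤ) - 1) b) w =
        cbinom n i • A.act (d.mode a ((i : ℤ) - 1) b) (n + s - i - 1) w := by
    intro i _
    rw [A.toWeakMod.o_smul]
    congr 1
    have hmem : d.mode a ((i : ℤ) - 1) b ∈ d.grading (n + s - i) := by
      have h := d.grading_mode n s ((i : ℤ) - 1) a b ha hb
      have : n + s - ((i : ℤ) - 1) - 1 = n + s - i := by ring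
      rwa [this] at h
    rw [A.toWeakMod.o_homog hmem]
  rw [Finset.sum_congr rfl hterm]
  rw [← finsum_eq_sum_of_support_subset
    (fun i : ℕ => cbinom n i • A.act (d.mode a ((i : ℤ) - 1) b) (n + s - i - 1) w)
    (s := Finset.range I) ?hsub]
  · exact A.key ha hb hw
  case hsub =>
    intro i hi
    simp only [Function.mem_support] at hi
    simp only [Finset.coe_range, Set.mem_Iio]
    by_contra h
    apply hi
    rw [hI i (by omega), A.toWeakMod.act_zero, LinearMap.zero_apply, smul_zero]

end Aux

/-- on `M(0)`, `o(u) o(v) = o(u * v)`. -/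
theorem stmt4 {M : Type} [AddCommGroup M] [Module ℂ M] (d : VOA V) (A : AdmMod d M)
    (u v : V) (w : M) (hw : w ∈ A.gr 0) :
    A.toWeakMod.o u (A.toWeakMod.o v w) = A.toWeakMod.o (d.star u v) w := by
  classical
  set Su := (d.proj_support_finite u).toFinset with hSu
  set Sv := (d.proj_support_finite v).toFinset with hSv
  have hSu' : (Function.support fun n => d.proj n u) ⊆ ↑Su := by
    intro n hn; rw [hSu]; exact (d.proj_support_finite u).mem_toFinset.mpr hn
  have hSv' : (Function.support fun n => d.proj n v) ⊆ ↑Sv := by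
    intro n hn; rw [hSv]; exact (d.proj_support_finite v).mem_toFinset.mpr hn
  have hL : A.toWeakMod.o u (A.toWeakMod.o v w) =
      ∑ r ∈ Su, ∑ s ∈ Sv,
        A.act (d.proj r u) (r - 1) (A.act (d.proj s v) (s - 1) w) := by
    rw [A.toWeakMod.o_eq_sum u _ hSu']
    apply Finset.sum_congr rfl
    intro r _
    rw [A.toWeakMod.o_eq_sum v w hSv', map_sum]
  have hstar : d.star u v =
      ∑ r ∈ Su, ∑ s ∈ Sv, d.hres (r + 0) 1 (d.proj r u) (d.proj s v) := by
    rw [VOA.star, VOA.bres,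
      finsum_eq_sum_of_support_subset _
        (show (Function.support fun n => d.hres (n + 0) 1 (d.proj n u) v) ⊆ ↑Su from ?_)]
    · apply Finset.sum_congr rfl
      intro n _
      rw [← d.hres_sum_right, d.sum_proj_finset v hSv']
    · intro n hn
      apply hSu'
      simp only [Function.mem_support] at hn ⊢
      intro h0; apply hn; rw [h0, d.hres_zero_left]
  rw [hL, hstar, A.toWeakMod.o_sum]
  apply Finset.sum_congr rfl
  intro r _
  rw [A.toWeakMod.o_sum]
  apply Finset.sum_congr rfl
  intro s _
  simp only [add_zero]
  exact (A.o_hres (d.proj_mem r u) (d.proj_mem s v) hw).symm
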